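/- arXiv:1708.06804 — 3 statements merged into one kernel-verified Lean document; each statement's English description precedes it below -/
import Mathlib

section
/- There exists c₂ > 0, depending only on ρ, such that every continuous function v: [−ρ, ρ] → ℝ with ∫_{−ρ}^{ρ} |z|·|v(z) − sign(z)|² dz ≤ c₂ has a zero s₀ ∈ [−ρ/2, ρ/2]. -/
open MeasureTheory Real

/-- There exists `c₂ > 0`, depending only on `ρ`, such that every continuous
function `v : [−ρ, ρ] → ℝ` with `∫_{−ρ}^{ρ} |z|·|v(z) − sign(z)|² dz ≤ c₂` has a zero
`s₀ ∈ [−ρ/2, ρ/2]`. -/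
theorem small_theta2_implies_zero (ρ : ℝ) (hρ : 0 < ρ) :
    ∃ c₂ > 0, ∀ v : ℝ → ℝ, ContinuousOn v (Set.Icc (-ρ) ρ) →
      (∫ z in Set.Ioo (-ρ) ρ, |z| * (v z - Real.sign z) ^ 2) ≤ c₂ →
      ∃ s₀ ∈ Set.Icc (-(ρ / 2)) (ρ / 2), v s₀ = 0 := by
  refine ⟨ρ^2/16, by positivity, fun v hv hint => ?_⟩
  by_contra h
  push_neg at h
  have hsub : Set.Icc (-(ρ/2)) (ρ/2) ⊆ Set.Icc (-ρ) ρ :=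
    Set.Icc_subset_Icc (by linarith) (by linarith)
  set f : ℝ → ℝ := fun z => |z| * (v z - Real.sign z) ^ 2 with hf
  -- sign bound
  have hsgn : ∀ z : ℝ, |Real.sign z| ≤ 1 := by
    intro z
    rcases lt_trichotomy z 0 with hz | hz | hz
    · rw [Real.sign_of_neg hz]; norm_num
    · simp [hz, Real.sign_zero]
    · rw [Real.sign_of_pos hz]; norm_num
  -- integrability of f on Ioo (-ρ) ρ
  have hsignm : Measurable Real.sign := by
    have he : Real.sign = fun x : ℝ => if x < 0 then (-1:ℝ) else if 0 < x then 1 else 0 := by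
      funext x; rfl
    rw [he]
    exact Measurable.ite measurableSet_Iio measurable_const
      (Measurable.ite measurableSet_Ioi measurable_const measurable_const)
  obtain ⟨M, hM⟩ := isCompact_Icc.exists_bound_of_continuousOn hv
  have hmeas : AEMeasurable v (volume.restrict (Set.Ioo (-ρ) ρ)) :=
    (hv.mono Set.Ioo_subset_Icc_self).aemeasurable measurableSet_Ioo
  have hmf : AEStronglyMeasurable f (volume.restrict (Set.Ioo (-ρ) ρ)) := by
    apply AEMeasurable.aestronglyMeasurable
    exact measurable_abs.aemeasurable.mul
      ((hmeas.sub hsignm.aemeasurable).pow aemeasurable_const)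
  have hintg : IntegrableOn f (Set.Ioo (-ρ) ρ) := by
    apply Integrable.mono' (integrable_const (ρ * (M+1)^2)) hmf
    filter_upwards [ae_restrict_mem measurableSet_Ioo] with z hz
    have hz1 : |z| ≤ ρ := by
      rw [abs_le]; exact ⟨hz.1.le, hz.2.le⟩
    have hvz : ‖v z‖ ≤ M := hM z (Set.Ioo_subset_Icc_self hz)
    have h2 : |v z - Real.sign z| ≤ M + 1 := by
      calc |v z - Real.sign z| ≤ |v z| + |Real.sign z| := abs_sub _ _
        _ ≤ M + 1 := add_le_add hvz (hsgn z)
    have h3 : (v z - Real.sign z)^2 ≤ (M+1)^2 := by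
      rw [← sq_abs]
      exact pow_le_pow_left₀ (abs_nonneg _) h2 2
    have h0 : (0:ℝ) ≤ f z := mul_nonneg (abs_nonneg _) (sq_nonneg _)
    rw [Real.norm_eq_abs, abs_of_nonneg h0]
    exact mul_le_mul hz1 h3 (sq_nonneg _) hρ.le
  have hfnonneg : 0 ≤ᵐ[volume.restrict (Set.Ioo (-ρ) ρ)] f :=
    Filter.Eventually.of_forall fun z => mul_nonneg (abs_nonneg _) (sq_nonneg _)
  -- constant sign on inner interval
  have hsign : (∀ x ∈ Set.Icc (-(ρ/2)) (ρ/2), 0 < v x) ∨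
      (∀ x ∈ Set.Icc (-(ρ/2)) (ρ/2), v x < 0) := by
    by_contra hc
    push_neg at hc
    obtain ⟨⟨a, ha, ha'⟩, b, hb, hb'⟩ := hc
    have hva : v a < 0 := lt_of_le_of_ne ha' (h a ha)
    have hvb : 0 < v b := lt_of_le_of_ne hb' (h b hb).symm
    have huIcc : Set.uIcc a b ⊆ Set.Icc (-(ρ/2)) (ρ/2) := Set.uIcc_subset_Icc ha hb
    have := intermediate_value_uIcc (hv.mono (huIcc.trans hsub))
    have h0 : (0:ℝ) ∈ Set.uIcc (v a) (v b) :=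
      Set.mem_uIcc.mpr (Or.inl ⟨hva.le, hvb.le⟩)
    obtain ⟨s₀, hs₀, hvs₀⟩ := this h0
    exact h s₀ (huIcc hs₀) hvs₀
  have hρ2 : 0 < ρ^2 := by positivity
  rcases hsign with hpos | hneg
  · -- v > 0 on inner interval; work on Ioo (-(ρ/2)) 0
    have hss : Set.Ioo (-(ρ/2)) (0:ℝ) ⊆ Set.Ioo (-ρ) ρ :=
      Set.Ioo_subset_Ioo (by linarith) (by linarith)
    have hg : ∫ z in Set.Ioo (-(ρ/2)) (0:ℝ), (-z) = ρ^2/8 := by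
      rw [← MeasureTheory.integral_Ioc_eq_integral_Ioo,
        ← intervalIntegral.integral_of_le (by linarith : -(ρ/2) ≤ (0:ℝ))]
      rw [intervalIntegral.integral_neg, integral_id]
      ring
    have hmono : ∫ z in Set.Ioo (-(ρ/2)) (0:ℝ), (-z) ≤ ∫ z in Set.Ioo (-(ρ/2)) (0:ℝ), f z := by
      apply setIntegral_mono_on (((by continuity : Continuous fun z : ℝ => -z).integrableOn_Icc).mono_set Set.Ioo_subset_Icc_self)
        (hintg.mono_set hss) measurableSet_Ioo
      intro z hz
      have hzneg : z < 0 := hz.2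
      have hv0 : 0 < v z := hpos z ⟨hz.1.le, by linarith⟩
      rw [hf]
      simp only
      rw [Real.sign_of_neg hzneg, abs_of_neg hzneg]
      have h1 : (1:ℝ) ≤ (v z - (-1))^2 := by nlinarith
      calc -z = -z * 1 := (mul_one _).symm
        _ ≤ -z * (v z - (-1))^2 := by nlinarith
    have hmono2 : ∫ z in Set.Ioo (-(ρ/2)) (0:ℝ), f z ≤ ∫ z in Set.Ioo (-ρ) ρ, f z :=
      setIntegral_mono_set hintg hfnonneg (HasSubset.Subset.eventuallyLE hss)
    rw [hg] at hmono
    nlinarith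
  · -- v < 0 on inner interval; work on Ioo 0 (ρ/2)
    have hss : Set.Ioo (0:ℝ) (ρ/2) ⊆ Set.Ioo (-ρ) ρ :=
      Set.Ioo_subset_Ioo (by linarith) (by linarith)
    have hg : ∫ z in Set.Ioo (0:ℝ) (ρ/2), z = ρ^2/8 := by
      rw [← MeasureTheory.integral_Ioc_eq_integral_Ioo,
        ← intervalIntegral.integral_of_le (by linarith : (0:ℝ) ≤ ρ/2)]
      rw [integral_id]
      ring
    have hmono : ∫ z in Set.Ioo (0:ℝ) (ρ/2), z ≤ ∫ z in Set.Ioo (0:ℝ) (ρ/2), f z := by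
      apply setIntegral_mono_on ((continuous_id.integrableOn_Icc).mono_set Set.Ioo_subset_Icc_self)
        (hintg.mono_set hss) measurableSet_Ioo
      intro z hz
      have hzpos : 0 < z := hz.1
      have hv0 : v z < 0 := hneg z ⟨by linarith, hz.2.le⟩
      rw [hf]
      simp only
      rw [Real.sign_of_pos hzpos, abs_of_pos hzpos]
      simp only [id_eq]
      have h1 : (1:ℝ) ≤ (v z - 1)^2 := by nlinarith
      calc z = z * 1 := (mul_one z).symm
        _ ≤ z * (v z - 1)^2 := by nlinarith
    have hmono2 : ∫ z in Set.Ioo (0:ℝ) (ρ/2), f z ≤ ∫ z in Set.Ioo (-ρ) ρ, f z :=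
      setIntegral_mono_set hintg hfnonneg (HasSubset.Subset.eventuallyLE hss)
    rw [hg] at hmono
    nlinarith
end

section
/- There exists a constant C > 0 such that for every α ∈ (0, √2] and every h ∈ L²(ℝ) with ‖h‖_{L²(ℝ)} < α/C, the map w₀ ↦ S_h w₀ sends the ball B_α := {w ∈ H¹(ℝ): ‖w‖_{H¹(ℝ)} ≤ α} into itself. -/
open MeasureTheory Real

/-- The solution operator `S_h w₀ (s) := ∫₀ˢ exp(−∫ₜˢ (2·tanh τ + w₀ τ) dτ)·h(t) dt`,
i.e. the solution of `w₁′ = −(2·tanh + w₀)·w₁ + h`, `w₁(0) = 0`. -/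
noncomputable def Sop (h w₀ : ℝ → ℝ) (s : ℝ) : ℝ :=
  ∫ t in (0 : ℝ)..s, Real.exp (-(∫ τ in t..s, (2 * Real.tanh τ + w₀ τ))) * h t

/-- The `H¹(ℝ)` norm `(‖w‖²_{L²} + ‖w′‖²_{L²})^{1/2}`. -/
noncomputable def H1norm (w : ℝ → ℝ) : ℝ :=
  Real.sqrt ((∫ t : ℝ, (w t) ^ 2) + ∫ t : ℝ, (deriv w t) ^ 2)

/-- The `L²(ℝ)` norm. -/
noncomputable def L2norm (h : ℝ → ℝ) : ℝ :=
  Real.sqrt (∫ t : ℝ, (h t) ^ 2)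

/-! Write `a = 2 tanh + w₀`. Since `∫ₜˢ 2 tanh = 2 log (cosh s / cosh t)` and, once
`‖w₀‖²_{L²} ≤ 2`, `|∫ₜˢ w₀| ≤ 1 + |s - t| / 2`, the kernel `exp (-∫ₜˢ a)` of `S_h` is at most
`4e · exp (-|s - t|)` for `t` between `0` and `s`. Hence `|S_h w₀| ≤ 4e · (exp (-|·|) ∗ |h|)`,
and Cauchy–Schwarz against the weight `exp (-|s - t|)` gives both `‖S_h w₀‖²_∞ ≤ 2 (4e)² ‖h‖²`
and `‖S_h w₀‖²_{L²} ≤ 4 (4e)² ‖h‖²`. Almost everywhere `(S_h w₀)′ = h - a · S_h w₀` (Lebesgue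
differentiation), so `‖(S_h w₀)′‖_{L²}` is controlled by `‖h‖`, `‖S_h w₀‖_{L²}` and
`‖S_h w₀‖_∞ ‖w₀‖_{L²}`. Altogether `‖S_h w₀‖_{H¹} ≤ 36e ‖h‖_{L²}`, so `C = 36e` works. -/

open Set Filter

lemma integral_exp_neg_abs : ∫ x : ℝ, exp (-|x|) = 2 := by
  rw [integral_comp_abs (f := fun x => exp (-x)), integral_exp_neg_Ioi_zero, mul_one]

lemma integrable_exp_neg_abs : Integrable fun x : ℝ => exp (-|x|) :=
  Integrable.of_integral_ne_zero (by rw [integral_exp_neg_abs]; norm_num)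

lemma sq_integral_mul_abs_le {α : Type*} [MeasurableSpace α] {μ : Measure α} {k f : α → ℝ}
    (hk₀ : ∀ x, 0 ≤ k x) (hk : Integrable k μ) (hkf : Integrable (fun x => k x * |f x|) μ)
    (hkf₂ : Integrable (fun x => k x * f x ^ 2) μ) :
    (∫ x, k x * |f x| ∂μ) ^ 2 ≤ (∫ x, k x ∂μ) * ∫ x, k x * f x ^ 2 ∂μ := by
  -- `c ↦ ∫ k (c - |f|)²` is a nonnegative quadratic polynomial: its discriminant is `≤ 0`.
  have hquad : ∀ c : ℝ, 0 ≤ (∫ x, k x ∂μ) * (c * c) + (-2 * ∫ x, k x * |f x| ∂μ) * c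
      + ∫ x, k x * f x ^ 2 ∂μ := by
    intro c
    have hexpand : ∀ x, k x * (c - |f x|) ^ 2
        = (c * c) * k x + (-2 * c) * (k x * |f x|) + k x * f x ^ 2 := fun x => by
      rw [sub_sq, sq_abs]; ring
    have hint : 0 ≤ ∫ x, k x * (c - |f x|) ^ 2 ∂μ :=
      integral_nonneg fun x => mul_nonneg (hk₀ x) (sq_nonneg _)
    simp_rw [hexpand] at hint
    rw [integral_add (f := fun x => c * c * k x + -2 * c * (k x * |f x|))
      ((hk.const_mul _).add (hkf.const_mul _)) hkf₂,
      integral_add (hk.const_mul _) (hkf.const_mul _), integral_const_mul,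
      integral_const_mul] at hint
    linear_combination hint
  have := discrim_le_zero hquad
  rw [discrim] at this
  linarith

section ExpKernel

variable {h : ℝ → ℝ}

lemma integrable_exp_neg_abs_sub_mul {g : ℝ → ℝ} (hg : Integrable g) (s : ℝ) :
    Integrable fun t => exp (-|s - t|) * g t :=
  hg.bdd_mul (c := 1) (by fun_prop) (Eventually.of_forall fun t => by
    rw [norm_of_nonneg (exp_pos _).le, exp_le_one_iff, neg_nonpos]; exact abs_nonneg _)

lemma integrable_exp_neg_abs_sub_mul_abs (hh : MemLp h 2) (s : ℝ) :
    Integrable fun t => exp (-|s - t|) * |h t| := by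
  refine Integrable.mono' (((integrable_exp_neg_abs.comp_sub_left s).add
    (integrable_exp_neg_abs_sub_mul hh.integrable_sq s)).div_const 2)
    ((by fun_prop : Continuous fun t => exp (-|s - t|)).aestronglyMeasurable.mul hh.1.norm)
    (Eventually.of_forall fun t => ?_)
  rw [norm_of_nonneg (by positivity)]
  show _ ≤ (exp (-|s - t|) + exp (-|s - t|) * h t ^ 2) / 2
  rw [← sq_abs (h t)]
  nlinarith [mul_nonneg (exp_pos (-|s - t|)).le (sq_nonneg (|h t| - 1))]

lemma sq_integral_exp_neg_abs_sub_mul_abs_le (hh : MemLp h 2) (s : ℝ) :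
    (∫ t, exp (-|s - t|) * |h t|) ^ 2 ≤ 2 * ∫ t, exp (-|s - t|) * h t ^ 2 := by
  have := sq_integral_mul_abs_le (fun t => (exp_pos _).le)
    (integrable_exp_neg_abs.comp_sub_left s) (integrable_exp_neg_abs_sub_mul_abs hh s)
    (integrable_exp_neg_abs_sub_mul hh.integrable_sq s)
  rwa [integral_sub_left_eq_self (fun t => exp (-|t|)) volume s, integral_exp_neg_abs] at this

lemma integral_exp_neg_abs_sub_mul_sq_le (hh : MemLp h 2) (s : ℝ) :
    ∫ t, exp (-|s - t|) * h t ^ 2 ≤ ∫ t, h t ^ 2 :=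
  integral_mono (integrable_exp_neg_abs_sub_mul hh.integrable_sq s) hh.integrable_sq fun _ =>
    mul_le_of_le_one_left (sq_nonneg _) (exp_le_one_iff.2 (neg_nonpos.2 (abs_nonneg _)))

lemma convolution_sq_exp_neg_abs_eq :
    convolution (fun t => h t ^ 2) (fun x => exp (-|x|)) (ContinuousLinearMap.mul ℝ ℝ) volume
      = fun s => ∫ t, exp (-|s - t|) * h t ^ 2 := by
  ext s
  simp [convolution_def, mul_comm]

lemma integrable_integral_exp_neg_abs_sub_mul_sq (hh : MemLp h 2) :
    Integrable fun s => ∫ t, exp (-|s - t|) * h t ^ 2 := by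
  rw [← convolution_sq_exp_neg_abs_eq]
  exact hh.integrable_sq.integrable_convolution _ integrable_exp_neg_abs

lemma integral_integral_exp_neg_abs_sub_mul_sq (hh : MemLp h 2) :
    ∫ s, ∫ t, exp (-|s - t|) * h t ^ 2 = 2 * ∫ t, h t ^ 2 := by
  rw [← convolution_sq_exp_neg_abs_eq,
    integral_convolution _ hh.integrable_sq integrable_exp_neg_abs, integral_exp_neg_abs]
  simp [mul_comm]

end ExpKernel

@[fun_prop]
lemma Real.continuous_tanh : Continuous tanh := by
  simp_rw [funext tanh_eq_sinh_div_cosh]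
  exact continuous_sinh.div continuous_cosh fun x => (cosh_pos x).ne'

lemma integral_tanh (t s : ℝ) : ∫ τ in t..s, tanh τ = log (cosh s) - log (cosh t) := by
  refine intervalIntegral.integral_eq_sub_of_hasDerivAt (f := fun x => log (cosh x)) (fun x _ => ?_)
    (continuous_tanh.intervalIntegrable t s)
  simpa [tanh_eq_sinh_div_cosh] using (hasDerivAt_cosh x).log (cosh_pos x).ne'

lemma log_cosh_sub_log_cosh_le {s t : ℝ} (ht : t ∈ uIcc 0 s) :
    log (cosh t) - log (cosh s) ≤ log 2 - |s - t| := by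
  have hts : |s - t| = |s| - |t| := by
    rcases le_total 0 s with hs | hs
    · rw [uIcc_of_le hs] at ht
      rw [abs_of_nonneg ht.1, abs_of_nonneg hs, abs_of_nonneg (by linarith [ht.2])]
    · rw [uIcc_of_ge hs] at ht
      rw [abs_of_nonpos ht.2, abs_of_nonpos hs, abs_of_nonpos (by linarith [ht.1])]
      ring
  have hcosh_le : log (cosh t) ≤ |t| := by
    rw [log_le_iff_le_exp (cosh_pos t), cosh_eq]
    linarith [exp_le_exp.2 (le_abs_self t), exp_le_exp.2 (neg_le_abs t)]
  have hcosh_ge : |s| ≤ log 2 + log (cosh s) := by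
    rw [← log_mul two_ne_zero (cosh_pos s).ne', le_log_iff_exp_le (by positivity), cosh_eq]
    rcases le_total 0 s with hs | hs
    · rw [abs_of_nonneg hs]; linarith [exp_pos (-s)]
    · rw [abs_of_nonpos hs]; linarith [exp_pos s]
  linarith

lemma abs_intervalIntegral_le_of_memLp {w : ℝ → ℝ} (hw : MemLp w 2) (t s : ℝ) :
    |∫ τ in t..s, w τ| ≤ ((∫ τ, w τ ^ 2) + |s - t|) / 2 := by
  have hfin : volume (uIoc t s) ≠ ⊤ := by rw [volume_uIoc]; exact ENNReal.ofReal_ne_top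
  have hw₂ : Integrable (fun τ => w τ ^ 2) := hw.integrable_sq
  calc |∫ τ in t..s, w τ| ≤ ∫ τ in uIoc t s, |w τ| := by
        simpa only [Real.norm_eq_abs] using
          intervalIntegral.norm_integral_le_integral_norm_uIoc (f := w) (μ := volume)
    _ ≤ ∫ τ in uIoc t s, (w τ ^ 2 + 1) / 2 := by
        refine setIntegral_mono_on ?_ ((hw₂.integrableOn.add (integrableOn_const hfin)).div_const 2)
          measurableSet_uIoc fun τ _ => ?_
        · exact ((hw.locallyIntegrable one_le_two).integrableOn_isCompact isCompact_uIcc).mono_set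
            uIoc_subset_uIcc |>.norm
        · rw [← sq_abs (w τ)]
          nlinarith [sq_nonneg (|w τ| - 1)]
    _ = ((∫ τ in uIoc t s, w τ ^ 2) + |s - t|) / 2 := by
        rw [integral_div, integral_add hw₂.integrableOn (integrableOn_const hfin),
          setIntegral_const, measureReal_def, volume_uIoc, ENNReal.toReal_ofReal (abs_nonneg _),
          smul_eq_mul, mul_one]
    _ ≤ ((∫ τ, w τ ^ 2) + |s - t|) / 2 := by
        have := setIntegral_le_integral (s := uIoc t s) hw₂
          (Eventually.of_forall fun τ => sq_nonneg (w τ))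
        linarith

lemma exp_neg_integral_two_tanh_add_le {w : ℝ → ℝ} {B : ℝ} (hw : MemLp w 2)
    (hB : ∫ τ, w τ ^ 2 ≤ 2 * B) {s t : ℝ} (ht : t ∈ uIcc 0 s) :
    exp (-∫ τ in t..s, (2 * tanh τ + w τ)) ≤ 4 * exp B * exp (-|s - t|) := by
  have hw_int : IntervalIntegrable w volume t s :=
    ((hw.locallyIntegrable one_le_two).integrableOn_isCompact isCompact_uIcc).intervalIntegrable
  rw [intervalIntegral.integral_add ((continuous_tanh.intervalIntegrable t s).const_mul 2) hw_int,
    intervalIntegral.integral_const_mul, integral_tanh,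
    show (4 : ℝ) = exp (2 * log 2) by rw [← log_rpow two_pos, exp_log (by positivity)]; norm_num,
    ← exp_add, ← exp_add]
  gcongr
  have := abs_intervalIntegral_le_of_memLp hw t s
  linarith [log_cosh_sub_log_cosh_le ht, neg_abs_le (∫ τ in t..s, w τ), abs_nonneg (s - t)]

noncomputable def duhamel (a h : ℝ → ℝ) (s : ℝ) : ℝ :=
  ∫ t in (0 : ℝ)..s, exp (-∫ τ in t..s, a τ) * h t

section Duhamel

variable {a h : ℝ → ℝ}

lemma duhamel_eq_exp_mul (ha : Continuous a) (s : ℝ) :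
    duhamel a h s = exp (-∫ τ in (0 : ℝ)..s, a τ) *
      ∫ t in (0 : ℝ)..s, exp (∫ τ in (0 : ℝ)..t, a τ) * h t := by
  rw [duhamel, ← intervalIntegral.integral_const_mul]
  refine intervalIntegral.integral_congr fun t _ => ?_
  rw [← intervalIntegral.integral_interval_sub_left (ha.intervalIntegrable 0 s)
    (ha.intervalIntegrable 0 t), neg_sub, sub_eq_neg_add, exp_add]
  ring

lemma locallyIntegrable_exp_integral_mul (ha : Continuous a) (hh : LocallyIntegrable h) :
    LocallyIntegrable (fun t => exp (∫ τ in (0 : ℝ)..t, a τ) * h t) volume :=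
  hh.continuous_mul
    (intervalIntegral.continuous_primitive (fun _ _ => ha.intervalIntegrable _ _) 0).rexp

lemma continuous_duhamel (ha : Continuous a) (hh : LocallyIntegrable h) :
    Continuous (duhamel a h) := by
  have hA : Continuous fun s => ∫ τ in (0 : ℝ)..s, a τ :=
    intervalIntegral.continuous_primitive (fun _ _ => ha.intervalIntegrable _ _) 0
  rw [funext (duhamel_eq_exp_mul ha)]
  exact hA.neg.rexp.mul <| intervalIntegral.continuous_primitive (fun _ _ =>
    ((locallyIntegrable_exp_integral_mul ha hh).integrableOn_isCompact
      isCompact_uIcc).intervalIntegrable) 0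

lemma ae_hasDerivAt_duhamel (ha : Continuous a) (hh : LocallyIntegrable h) :
    ∀ᵐ s, HasDerivAt (duhamel a h) (h s - a s * duhamel a h s) s := by
  filter_upwards [LocallyIntegrable.ae_hasDerivAt_integral
    (locallyIntegrable_exp_integral_mul ha hh)] with s hs
  have hA := (ha.integral_hasStrictDerivAt 0 s).hasDerivAt
  rw [funext (duhamel_eq_exp_mul ha)]
  refine (hA.neg.exp.mul (hs 0)).congr_deriv ?_
  have hcancel : exp (-∫ τ in (0 : ℝ)..s, a τ) * exp (∫ τ in (0 : ℝ)..s, a τ) = 1 := by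
    rw [← exp_add, neg_add_cancel, exp_zero]
  simp only [Pi.neg_apply]
  linear_combination h s * hcancel

end Duhamel

section ExpKernelDomination

variable {h w : ℝ → ℝ} {M : ℝ}

lemma sq_le_of_abs_le_mul_integral_exp_neg_abs (hh : MemLp h 2) {s : ℝ}
    (hws : |w s| ≤ M * ∫ t, exp (-|s - t|) * |h t|) :
    w s ^ 2 ≤ 2 * M ^ 2 * ∫ t, exp (-|s - t|) * h t ^ 2 := by
  calc w s ^ 2 = |w s| ^ 2 := (sq_abs _).symm
    _ ≤ (M * ∫ t, exp (-|s - t|) * |h t|) ^ 2 := pow_le_pow_left₀ (abs_nonneg _) hws 2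
    _ = M ^ 2 * (∫ t, exp (-|s - t|) * |h t|) ^ 2 := mul_pow _ _ _
    _ ≤ M ^ 2 * (2 * ∫ t, exp (-|s - t|) * h t ^ 2) := by
        gcongr; exact sq_integral_exp_neg_abs_sub_mul_abs_le hh s
    _ = 2 * M ^ 2 * ∫ t, exp (-|s - t|) * h t ^ 2 := by ring

lemma memLp_two_and_integral_sq_le_of_abs_le (hh : MemLp h 2) (hw : AEStronglyMeasurable w)
    (hwh : ∀ s, |w s| ≤ M * ∫ t, exp (-|s - t|) * |h t|) :
    MemLp w 2 ∧ ∫ s, w s ^ 2 ≤ 4 * M ^ 2 * ∫ t, h t ^ 2 := by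
  have hpt := fun s => sq_le_of_abs_le_mul_integral_exp_neg_abs hh (hwh s)
  have hdom := (integrable_integral_exp_neg_abs_sub_mul_sq hh).const_mul (2 * M ^ 2)
  have hw₂ : Integrable fun s => w s ^ 2 :=
    hdom.mono' (hw.pow 2) (Eventually.of_forall fun s => by
      rw [norm_of_nonneg (sq_nonneg _)]; exact hpt s)
  refine ⟨(memLp_two_iff_integrable_sq hw).2 hw₂, ?_⟩
  calc ∫ s, w s ^ 2 ≤ ∫ s, 2 * M ^ 2 * ∫ t, exp (-|s - t|) * h t ^ 2 :=
        integral_mono hw₂ hdom hpt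
    _ = 4 * M ^ 2 * ∫ t, h t ^ 2 := by
        rw [integral_const_mul, integral_integral_exp_neg_abs_sub_mul_sq hh]; ring

end ExpKernelDomination

section Sop

variable {h w₀ : ℝ → ℝ}

lemma continuous_Sop (hh : LocallyIntegrable h volume) (hw₀c : Continuous w₀) :
    Continuous (Sop h w₀) :=
  continuous_duhamel (by fun_prop) hh

lemma ae_hasDerivAt_Sop (hh : LocallyIntegrable h volume) (hw₀c : Continuous w₀) :
    ∀ᵐ s, HasDerivAt (Sop h w₀) (h s - (2 * tanh s + w₀ s) * Sop h w₀ s) s :=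
  ae_hasDerivAt_duhamel (by fun_prop) hh

lemma abs_Sop_le {B : ℝ} (hh : MemLp h 2) (hw₀ : MemLp w₀ 2) (hB : ∫ τ, w₀ τ ^ 2 ≤ 2 * B)
    (s : ℝ) : |Sop h w₀ s| ≤ 4 * exp B * ∫ t, exp (-|s - t|) * |h t| := by
  have hint := (integrable_exp_neg_abs_sub_mul_abs hh s).const_mul (4 * exp B)
  calc |Sop h w₀ s|
      ≤ ∫ t in uIoc 0 s, |exp (-∫ τ in t..s, (2 * tanh τ + w₀ τ)) * h t| := by
        simpa only [Sop, Real.norm_eq_abs] using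
          intervalIntegral.norm_integral_le_integral_norm_uIoc (μ := volume)
            (f := fun t => exp (-∫ τ in t..s, (2 * tanh τ + w₀ τ)) * h t)
    _ ≤ ∫ t in uIoc 0 s, 4 * exp B * (exp (-|s - t|) * |h t|) := by
        refine integral_mono_of_nonneg (Eventually.of_forall fun _ => abs_nonneg _)
          hint.integrableOn ((ae_restrict_iff' measurableSet_uIoc).2
            (Eventually.of_forall fun t ht => ?_))
        dsimp only
        rw [abs_mul, abs_of_pos (exp_pos _), ← mul_assoc]
        exact mul_le_mul_of_nonneg_right
          (exp_neg_integral_two_tanh_add_le hw₀ hB (uIoc_subset_uIcc ht)) (abs_nonneg _)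
    _ ≤ ∫ t, 4 * exp B * (exp (-|s - t|) * |h t|) :=
        setIntegral_le_integral hint (Eventually.of_forall fun _ => by positivity)
    _ = 4 * exp B * ∫ t, exp (-|s - t|) * |h t| := integral_const_mul _ _

lemma memLp_deriv_Sop_and_integral_sq_le {m : ℝ} (hh : MemLp h 2) (hw₀c : Continuous w₀)
    (hw₀ : MemLp w₀ 2) (hS : MemLp (Sop h w₀) 2) (hm : ∀ s, Sop h w₀ s ^ 2 ≤ m) :
    MemLp (deriv (Sop h w₀)) 2 ∧ ∫ s, deriv (Sop h w₀) s ^ 2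
      ≤ 3 * ((∫ s, h s ^ 2) + 4 * (∫ s, Sop h w₀ s ^ 2) + m * ∫ s, w₀ s ^ 2) := by
  set φ : ℝ → ℝ := fun s => h s - (2 * tanh s + w₀ s) * Sop h w₀ s
  have hderiv : deriv (Sop h w₀) =ᵐ[volume] φ := by
    filter_upwards [ae_hasDerivAt_Sop (hh.locallyIntegrable one_le_two) hw₀c] with s hs
    exact hs.deriv
  have hφ : AEStronglyMeasurable φ :=
    hh.1.sub (((continuous_const.mul continuous_tanh).add hw₀c).mul
      (continuous_Sop (hh.locallyIntegrable one_le_two) hw₀c)).aestronglyMeasurable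
  have hpt : ∀ s, φ s ^ 2 ≤ 3 * (h s ^ 2 + 4 * Sop h w₀ s ^ 2 + m * w₀ s ^ 2) := fun s => by
    have htanh := tanh_sq_lt_one s
    have hms := hm s
    nlinarith [sq_nonneg (h s + 2 * tanh s * Sop h w₀ s), sq_nonneg (h s + w₀ s * Sop h w₀ s),
      sq_nonneg (2 * tanh s * Sop h w₀ s - w₀ s * Sop h w₀ s),
      mul_nonneg (sub_nonneg.2 htanh.le) (sq_nonneg (Sop h w₀ s)),
      mul_nonneg (sub_nonneg.2 hms) (sq_nonneg (w₀ s))]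
  have hdom : Integrable fun s => 3 * (h s ^ 2 + 4 * Sop h w₀ s ^ 2 + m * w₀ s ^ 2) :=
    ((hh.integrable_sq.add (hS.integrable_sq.const_mul 4)).add
      (hw₀.integrable_sq.const_mul m)).const_mul 3
  have hφ₂ : Integrable fun s => φ s ^ 2 :=
    hdom.mono' (hφ.pow 2) (Eventually.of_forall fun s => by
      rw [norm_of_nonneg (sq_nonneg _)]; exact hpt s)
  refine ⟨((memLp_two_iff_integrable_sq hφ).2 hφ₂).ae_eq hderiv.symm, ?_⟩
  calc ∫ s, deriv (Sop h w₀) s ^ 2 = ∫ s, φ s ^ 2 :=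
        integral_congr_ae (hderiv.mono fun s hs => by dsimp only; rw [hs])
    _ ≤ ∫ s, 3 * (h s ^ 2 + 4 * Sop h w₀ s ^ 2 + m * w₀ s ^ 2) := integral_mono hφ₂ hdom hpt
    _ = _ := by
        rw [integral_const_mul, integral_add (f := fun s => h s ^ 2 + 4 * Sop h w₀ s ^ 2)
          (hh.integrable_sq.add (hS.integrable_sq.const_mul 4))
          (hw₀.integrable_sq.const_mul m), integral_add hh.integrable_sq
          (hS.integrable_sq.const_mul 4), integral_const_mul, integral_const_mul]

lemma memLp_Sop_and_H1norm_Sop_le (hh : MemLp h 2) (hw₀c : Continuous w₀)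
    (hw₀ : MemLp w₀ 2) (hB : ∫ t, w₀ t ^ 2 ≤ 2) :
    MemLp (Sop h w₀) 2 ∧ MemLp (deriv (Sop h w₀)) 2 ∧
      H1norm (Sop h w₀) ≤ 36 * exp 1 * L2norm h := by
  have habs := abs_Sop_le hh hw₀ (B := 1) (by rwa [mul_one])
  obtain ⟨hS, hS_int⟩ := memLp_two_and_integral_sq_le_of_abs_le hh
    (continuous_Sop (hh.locallyIntegrable one_le_two) hw₀c).aestronglyMeasurable habs
  have hS_sup : ∀ s, Sop h w₀ s ^ 2 ≤ 2 * (4 * exp 1) ^ 2 * ∫ t, h t ^ 2 := fun s =>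
    (sq_le_of_abs_le_mul_integral_exp_neg_abs hh (habs s)).trans
      (mul_le_mul_of_nonneg_left (integral_exp_neg_abs_sub_mul_sq_le hh s) (by positivity))
  obtain ⟨hS', hS'_int⟩ := memLp_deriv_Sop_and_integral_sq_le hh hw₀c hw₀ hS hS_sup
  refine ⟨hS, hS', (sqrt_le_left (mul_nonneg (by positivity) (sqrt_nonneg _))).2 ?_⟩
  have hh₂ : 0 ≤ ∫ t, h t ^ 2 := integral_nonneg fun _ => sq_nonneg _
  have he : 1 ≤ exp 1 := one_le_exp zero_le_one
  rw [mul_pow, sq_sqrt hh₂]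
  nlinarith [mul_le_mul_of_nonneg_left hB (by positivity : 0 ≤ 2 * (4 * exp 1) ^ 2 * ∫ t, h t ^ 2),
    mul_le_mul_of_nonneg_right (one_le_pow₀ (n := 2) he) hh₂]

end Sop

/-- There is a constant `C > 0` such that for every `α ∈ (0, √2]` and every
`h ∈ L²(ℝ)` with `‖h‖_{L²(ℝ)} < α/C`, the map `w₀ ↦ S_h w₀` sends the `H¹(ℝ)`-ball
`B_α = {w : ‖w‖_{H¹(ℝ)} ≤ α}` into itself. -/
theorem Sop_ball_stability :
    ∃ C > 0, ∀ α : ℝ, α ∈ Set.Ioc (0 : ℝ) (Real.sqrt 2) →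
      ∀ h : ℝ → ℝ, MemLp h 2 (volume : Measure ℝ) → L2norm h < α / C →
      ∀ w₀ : ℝ → ℝ,
        Differentiable ℝ w₀ →
        MemLp w₀ 2 (volume : Measure ℝ) →
        MemLp (deriv w₀) 2 (volume : Measure ℝ) →
        H1norm w₀ ≤ α →
        (MemLp (Sop h w₀) 2 (volume : Measure ℝ) ∧
         MemLp (deriv (Sop h w₀)) 2 (volume : Measure ℝ) ∧
         H1norm (Sop h w₀) ≤ α) := by
  refine ⟨36 * exp 1, by positivity, ?_⟩
  rintro α ⟨-, hα⟩ h hh hhα w₀ hw₀ hw₀₂ - hw₀α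
  have hB : ∫ t, w₀ t ^ 2 ≤ 2 := by
    have := (sqrt_le_sqrt_iff zero_le_two).1 (hw₀α.trans hα)
    linarith [(integral_nonneg fun _ => sq_nonneg _ : 0 ≤ ∫ t, deriv w₀ t ^ 2)]
  obtain ⟨hS, hS', hS_H1⟩ := memLp_Sop_and_H1norm_Sop_le hh hw₀.continuous hw₀₂ hB
  exact ⟨hS, hS', hS_H1.trans ((lt_div_iff₀' (by positivity)).1 hhα).le⟩
end

section
/- Define H: ℝ → ℝ by H(s) = s³/3 − s for −√3 ≤ s ≤ 0 and H(s) = 0 otherwise. Then: (i) H is Lipschitz continuous, differentiable except at s = 0 and s = −√3, and |H′(s)| ≤ |s² − 1| at every point of differentiability; and (ii) there exists a constant C > 0 such that (u − 1)² ≤ C·( (u² − 1)² + H(u)^{3/2} ) for every u ∈ ℝ. -/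
open Real

/-- `H(s) = s³/3 − s` for `−√3 ≤ s ≤ 0`, and `H(s) = 0` otherwise; this coincides with
`(s³/3 − s)⁺` on `[−√3, 0]`, where it is nonnegative. -/
noncomputable def Hcut (s : ℝ) : ℝ :=
  if s ∈ Set.Icc (-Real.sqrt 3) 0 then s ^ 3 / 3 - s else 0

private lemma sqrt3_sq : Real.sqrt 3 ^ 2 = 3 := Real.sq_sqrt (by norm_num)

private lemma sqrt3_gt : (3:ℝ)/2 < Real.sqrt 3 := by
  have : Real.sqrt ((3/2)^2) < Real.sqrt 3 := Real.sqrt_lt_sqrt (by positivity) (by norm_num)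
  rwa [Real.sqrt_sq (by norm_num)] at this

private lemma f_sqrt3 : (-Real.sqrt 3) ^ 3 / 3 - (-Real.sqrt 3) = 0 := by
  have h := sqrt3_sq
  nlinarith [Real.sqrt_nonneg 3]

private lemma key (x y : ℝ) (hx : x ∈ Set.Icc (-Real.sqrt 3) 0)
    (hy : y ∈ Set.Icc (-Real.sqrt 3) 0) :
    |(x ^ 3 / 3 - x) - (y ^ 3 / 3 - y)| ≤ 2 * |x - y| := by
  have h3 := sqrt3_sq
  have hs := Real.sqrt_nonneg 3
  have hx2 : x ^ 2 ≤ 3 := by nlinarith [hx.1, hx.2]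
  have hy2 : y ^ 2 ≤ 3 := by nlinarith [hy.1, hy.2]
  have hxy : x * y ≤ 3 := by nlinarith [sq_nonneg (x - y)]
  have heq : (x ^ 3 / 3 - x) - (y ^ 3 / 3 - y)
      = (x - y) * ((x ^ 2 + x * y + y ^ 2) / 3 - 1) := by ring
  rw [heq, abs_mul, mul_comm (2:ℝ)]
  refine mul_le_mul_of_nonneg_left ?_ (abs_nonneg _)
  rw [abs_le]
  constructor
  · nlinarith [sq_nonneg (x + y)]
  · nlinarith

private lemma Hcut_abs_le (x y : ℝ) : |Hcut x - Hcut y| ≤ 2 * |x - y| := by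
  have hs := Real.sqrt_nonneg 3
  have aux : ∀ a b : ℝ, a ∈ Set.Icc (-Real.sqrt 3) 0 → b ∉ Set.Icc (-Real.sqrt 3) 0 →
      |Hcut a - Hcut b| ≤ 2 * |a - b| := by
    intro a b ha hb
    have hHa : Hcut a = a ^ 3 / 3 - a := if_pos ha
    have hHb : Hcut b = 0 := if_neg hb
    rw [Set.mem_Icc, not_and_or, not_le, not_le] at hb
    rcases hb with hb | hb
    · -- b < -√3
      have h1 : |(a ^ 3 / 3 - a) - ((-Real.sqrt 3) ^ 3 / 3 - (-Real.sqrt 3))|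
          ≤ 2 * |a - (-Real.sqrt 3)| :=
        key a (-Real.sqrt 3) ha ⟨le_refl _, by linarith⟩
      rw [f_sqrt3] at h1
      rw [hHa, hHb]
      have h2 : |a - (-Real.sqrt 3)| ≤ |a - b| := by
        rw [abs_of_nonneg (by linarith [ha.1]), abs_of_nonneg (by linarith [ha.1])]
        linarith
      calc |(a ^ 3 / 3 - a) - 0| ≤ 2 * |a - (-Real.sqrt 3)| := by simpa using h1
        _ ≤ 2 * |a - b| := by linarith
    · -- 0 < b
      have h1 : |(a ^ 3 / 3 - a) - ((0:ℝ) ^ 3 / 3 - 0)| ≤ 2 * |a - 0| :=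
        key a 0 ha ⟨by linarith, le_refl _⟩
      rw [hHa, hHb]
      have h2 : |a - (0:ℝ)| ≤ |a - b| := by
        rw [abs_of_nonpos (by linarith [ha.2]), abs_of_nonpos (by linarith [ha.2])]
        linarith
      calc |(a ^ 3 / 3 - a) - 0| ≤ 2 * |a - 0| := by simpa using h1
        _ ≤ 2 * |a - b| := by linarith
  by_cases hx : x ∈ Set.Icc (-Real.sqrt 3) 0 <;> by_cases hy : y ∈ Set.Icc (-Real.sqrt 3) 0
  · have h1 : Hcut x = x ^ 3 / 3 - x := if_pos hx
    have h2 : Hcut y = y ^ 3 / 3 - y := if_pos hy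
    rw [h1, h2]; exact key x y hx hy
  · exact aux x y hx hy
  · rw [abs_sub_comm, abs_sub_comm x y]; exact aux y x hy hx
  · have h1 : Hcut x = 0 := if_neg hx
    have h2 : Hcut y = 0 := if_neg hy
    rw [h1, h2]; simp [abs_nonneg]

private lemma Hcut_eq_zero_of_gt {t : ℝ} (ht : 0 < t) : Hcut t = 0 := by
  apply if_neg
  rw [Set.mem_Icc]; push_neg; intro _; linarith

private lemma Hcut_eq_zero_of_lt {t : ℝ} (ht : t < -Real.sqrt 3) : Hcut t = 0 := by
  apply if_neg
  rw [Set.mem_Icc]; push_neg; intro h; linarith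

private lemma Hcut_zero : Hcut 0 = 0 := by
  rw [Hcut, if_pos ⟨by simpa using Real.sqrt_nonneg 3, le_refl _⟩]; norm_num

private lemma Hcut_neg_sqrt3 : Hcut (-Real.sqrt 3) = 0 := by
  rw [Hcut, if_pos ⟨le_refl _, by simpa using Real.sqrt_nonneg 3⟩]
  exact f_sqrt3

private lemma cubic_hasDerivAt (s : ℝ) :
    HasDerivAt (fun t : ℝ => t ^ 3 / 3 - t) (s ^ 2 - 1) s := by
  have h1 : HasDerivAt (fun t : ℝ => t ^ 3 / 3 - t)
      ((↑3 * s ^ (3 - 1)) / 3 - 1) s :=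
    ((hasDerivAt_pow 3 s).div_const 3).sub (hasDerivAt_id s)
  convert h1 using 1
  push_cast; ring

private lemma Hcut_nonneg (s : ℝ) : 0 ≤ Hcut s := by
  rw [Hcut]
  split
  · next h =>
    have h3 := sqrt3_sq
    have hs2 : s ^ 2 ≤ 3 := by nlinarith [h.1, h.2]
    nlinarith [mul_nonneg (neg_nonneg.2 h.2) (by linarith : (0:ℝ) ≤ 3 - s ^ 2)]
  · exact le_refl 0

/-- (i) `H` is Lipschitz continuous, differentiable except at `s = 0` and
`s = −√3`, with `|H′(s)| ≤ |s² − 1|` at every point of differentiability; and (ii) there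
is `C > 0` with `(u − 1)² ≤ C·((u² − 1)² + H(u)^{3/2})` for every `u ∈ ℝ`. -/
theorem Hcut_properties :
    (∃ K : NNReal, LipschitzWith K Hcut) ∧
    (∀ s : ℝ, s ≠ 0 → s ≠ -Real.sqrt 3 → DifferentiableAt ℝ Hcut s) ∧
    (∀ s : ℝ, DifferentiableAt ℝ Hcut s → |deriv Hcut s| ≤ |s ^ 2 - 1|) ∧
    (∃ C > 0, ∀ u : ℝ,
      (u - 1) ^ 2 ≤ C * ((u ^ 2 - 1) ^ 2 + Hcut u ^ ((3 : ℝ) / 2))) := by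
  refine ⟨⟨2, ?_⟩, ?_, ?_, ?_⟩
  · -- Lipschitz
    rw [lipschitzWith_iff_dist_le_mul]
    intro x y
    simp only [Real.dist_eq]
    have := Hcut_abs_le x y
    push_cast
    linarith
  · -- differentiable away from 0 and -√3
    intro s hs0 hs3
    rcases lt_trichotomy s (-Real.sqrt 3) with h | h | h
    · have he : Hcut =ᶠ[nhds s] fun _ => (0:ℝ) := by
        filter_upwards [Iio_mem_nhds h] with t ht
        exact Hcut_eq_zero_of_lt ht
      exact (differentiableAt_const (0:ℝ)).congr_of_eventuallyEq he
    · exact absurd h hs3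
    · rcases lt_trichotomy s 0 with h0 | h0 | h0
      · have he : Hcut =ᶠ[nhds s] fun t => t ^ 3 / 3 - t := by
          filter_upwards [Ioo_mem_nhds h h0] with t ht
          exact if_pos ⟨ht.1.le, ht.2.le⟩
        exact ((cubic_hasDerivAt s).differentiableAt).congr_of_eventuallyEq he
      · exact absurd h0 hs0
      · have he : Hcut =ᶠ[nhds s] fun _ => (0:ℝ) := by
          filter_upwards [Ioi_mem_nhds h0] with t ht
          exact Hcut_eq_zero_of_gt ht
        exact (differentiableAt_const (0:ℝ)).congr_of_eventuallyEq he
  · -- derivative bound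
    intro s hdiff
    rcases lt_trichotomy s (-Real.sqrt 3) with h | h | h
    · have he : Hcut =ᶠ[nhds s] fun _ => (0:ℝ) := by
        filter_upwards [Iio_mem_nhds h] with t ht
        exact Hcut_eq_zero_of_lt ht
      rw [he.deriv_eq, deriv_const]
      simp [abs_nonneg]
    · -- s = -√3 : one-sided derivative on Iic is 0
      subst h
      have h0' : HasDerivWithinAt Hcut 0 (Set.Iic (-Real.sqrt 3)) (-Real.sqrt 3) := by
        apply (hasDerivWithinAt_const (-Real.sqrt 3) (Set.Iic (-Real.sqrt 3)) (0:ℝ)).congr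
        · intro t ht
          rcases lt_or_eq_of_le (Set.mem_Iic.mp ht) with h' | h'
          · exact Hcut_eq_zero_of_lt h'
          · rw [h']; exact Hcut_neg_sqrt3
        · exact Hcut_neg_sqrt3
      have heq : deriv Hcut (-Real.sqrt 3) = 0 :=
        (uniqueDiffOn_Iic (-Real.sqrt 3) _ Set.self_mem_Iic).eq_deriv _
          hdiff.hasDerivAt.hasDerivWithinAt h0'
      rw [heq]
      simp [abs_nonneg]
    · rcases lt_trichotomy s 0 with h0 | h0 | h0
      · have he : Hcut =ᶠ[nhds s] fun t => t ^ 3 / 3 - t := by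
          filter_upwards [Ioo_mem_nhds h h0] with t ht
          exact if_pos ⟨ht.1.le, ht.2.le⟩
        rw [he.deriv_eq, (cubic_hasDerivAt s).deriv]
      · subst h0
        have h0' : HasDerivWithinAt Hcut 0 (Set.Ici (0:ℝ)) 0 := by
          apply (hasDerivWithinAt_const (0:ℝ) (Set.Ici (0:ℝ)) (0:ℝ)).congr
          · intro t ht
            rcases lt_or_eq_of_le (Set.mem_Ici.mp ht) with h' | h'
            · exact Hcut_eq_zero_of_gt h'
            · rw [← h']; exact Hcut_zero
          · exact Hcut_zero
        have heq : deriv Hcut 0 = 0 :=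
          (uniqueDiffOn_Ici (0:ℝ) _ Set.self_mem_Ici).eq_deriv _
            hdiff.hasDerivAt.hasDerivWithinAt h0'
        rw [heq]
        simp
      · have he : Hcut =ᶠ[nhds s] fun _ => (0:ℝ) := by
          filter_upwards [Ioi_mem_nhds h0] with t ht
          exact Hcut_eq_zero_of_gt ht
        rw [he.deriv_eq, deriv_const]
        simp [abs_nonneg]
  · -- the inequality
    refine ⟨64, by norm_num, fun u => ?_⟩
    have hHnn := Hcut_nonneg u
    have hrnn : 0 ≤ Hcut u ^ ((3:ℝ)/2) := Real.rpow_nonneg hHnn _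
    by_cases hcase : (1:ℝ)/4 ≤ (u + 1) ^ 2
    · nlinarith [mul_le_mul_of_nonneg_left hcase (sq_nonneg (u - 1)), sq_nonneg (u - 1)]
    · push_neg at hcase
      have hu1 : -3/2 < u := by nlinarith
      have hu2 : u < -1/2 := by nlinarith
      have hm : u ∈ Set.Icc (-Real.sqrt 3) 0 := ⟨by linarith [sqrt3_gt], by linarith⟩
      have hH : Hcut u = u ^ 3 / 3 - u := if_pos hm
      have hA : (0:ℝ) ≤ 2 * u + 3 := by linarith
      have hB : (0:ℝ) ≤ 4 * u ^ 2 - 6 * u - 3 := by nlinarith [sq_nonneg (2 * u + 1)]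
      have hlb : (3:ℝ)/8 ≤ Hcut u := by rw [hH]; nlinarith [mul_nonneg hA hB]
      have hub : Hcut u ≤ 1 := by
        rw [hH]
        nlinarith [mul_nonneg (sq_nonneg (u + 1)) (show (0:ℝ) ≤ 2 - u by linarith)]
      have h2 : Hcut u ^ (2:ℝ) ≤ Hcut u ^ ((3:ℝ)/2) :=
        Real.rpow_le_rpow_of_exponent_ge (by linarith) hub (by norm_num)
      rw [Real.rpow_two] at h2
      have hsq : (3/8:ℝ) ^ 2 ≤ Hcut u ^ 2 := by nlinarith
      nlinarith [sq_nonneg (u ^ 2 - 1)]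
end
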